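/- Consider one step of the EILM scheme: zⁿ⁺¹ = e^A zⁿ + h φ₁(A) S η ∇V(ẑ) together with the constraint V(zⁿ⁺¹) − V(zⁿ) = η ∇V(ẑ)ᵀ (zⁿ⁺¹ − zⁿ), where A = h S M, M is symmetric positive definite, η ∈ ℝ, and ẑ ∈ ℝ^n is fixed. Then the discrete energy H(z) = ½ zᵀ M z + V(z) satisfies: H(zⁿ⁺¹) = H(zⁿ) if S is skew-symmetric, and H(zⁿ⁺¹) ≤ H(zⁿ) if the symmetric part of S is negative semidefinite. -/

import Mathlib

/-!
Put `f̃ = η M⁻¹ ∇V(ẑ)`. Since `e^A = 1 + φ₁(A) A`, the EILM step is the exact linear flow shifted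
by `f̃`: `zⁿ⁺¹ + f̃ = e^{h S M} (zⁿ + f̃)`. Along `y(t) = e^{t S M} w` one has
`d/dt (yᵀ M y) = 2 (M y)ᵀ S (M y)`, which vanishes for skew `S` and is nonpositive when the
symmetric part of `S` is negative semidefinite. Because `M f̃ = η ∇V(ẑ)`, the constraint makes
`H(zⁿ⁺¹) − H(zⁿ)` half the change of `(z + f̃)ᵀ M (z + f̃)` along that flow.
-/

open Matrix

noncomputable def dotCLM {n : ℕ} (g : Fin n → ℝ) : (Fin n → ℝ) →L[ℝ] ℝ :=
  ∑ i, g i • ContinuousLinearMap.proj i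

noncomputable def symPart {m : Type*} [Fintype m] (A : Matrix m m ℝ) : Matrix m m ℝ :=
  (1/2 : ℝ) • (A + Aᵀ)

def NegSemidef {m : Type*} [Fintype m] (A : Matrix m m ℝ) : Prop :=
  Aᵀ = A ∧ ∀ x : m → ℝ, x ⬝ᵥ A.mulVec x ≤ 0

noncomputable def phi1 {n : ℕ} (A : Matrix (Fin n) (Fin n) ℝ) : Matrix (Fin n) (Fin n) ℝ :=
  ∑' k : ℕ, (((k + 1).factorial : ℝ))⁻¹ • A ^ k

section

variable {ι : Type*} [Fintype ι]

theorem HasDerivAt.dotProduct {f g : ℝ → ι → ℝ} {f' g' : ι → ℝ} {t : ℝ}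
    (hf : HasDerivAt f f' t) (hg : HasDerivAt g g' t) :
    HasDerivAt (fun s => f s ⬝ᵥ g s) (f' ⬝ᵥ g t + f t ⬝ᵥ g') t := by
  unfold _root_.dotProduct
  rw [← Finset.sum_add_distrib]
  exact HasDerivAt.fun_sum fun i _ => (hasDerivAt_pi.mp hf i).mul (hasDerivAt_pi.mp hg i)

theorem HasDerivAt.matrix_mulVec {κ : Type*} [Fintype κ] {f : ℝ → ι → ℝ} {f' : ι → ℝ} {t : ℝ}
    (A : Matrix κ ι ℝ) (hf : HasDerivAt f f' t) : HasDerivAt (fun s => A *ᵥ f s) (A *ᵥ f') t :=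
  (LinearMap.toContinuousLinearMap A.mulVecLin).hasFDerivAt.comp_hasDerivAt t hf

theorem hasDerivAt_exp_smul_mulVec [DecidableEq ι] (A : Matrix ι ι ℝ) (x : ι → ℝ) (t : ℝ) :
    HasDerivAt (fun s : ℝ => NormedSpace.exp (s • A) *ᵥ x)
      (A *ᵥ (NormedSpace.exp (t • A) *ᵥ x)) t := by
  let : NormedRing (Matrix ι ι ℝ) := Matrix.linftyOpNormedRing
  let : NormedAlgebra ℝ (Matrix ι ι ℝ) := Matrix.linftyOpNormedAlgebra
  rw [mulVec_mulVec]
  exact (LinearMap.toContinuousLinearMap ((mulVecBilin ℝ ℝ).flip x)).hasFDerivAt.comp_hasDerivAt t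
    (hasDerivAt_exp_smul_const' A t)

variable {M : Matrix ι ι ℝ}

theorem dotProduct_mulVec_of_transpose_eq (hM : Mᵀ = M) (u v : ι → ℝ) :
    u ⬝ᵥ M *ᵥ v = M *ᵥ u ⬝ᵥ v := by
  rw [dotProduct_mulVec, ← mulVec_transpose, hM]

theorem dotProduct_transpose_mulVec_self (A : Matrix ι ι ℝ) (v : ι → ℝ) :
    v ⬝ᵥ Aᵀ *ᵥ v = v ⬝ᵥ A *ᵥ v := by
  rw [dotProduct_mulVec, vecMul_transpose, dotProduct_comm]

theorem dotProduct_mulVec_self_eq_zero_of_transpose_eq_neg {S : Matrix ι ι ℝ} (hS : Sᵀ = -S)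
    (v : ι → ℝ) : v ⬝ᵥ S *ᵥ v = 0 := by
  have h := dotProduct_transpose_mulVec_self S v
  rw [hS, neg_mulVec, dotProduct_neg] at h
  linarith

theorem dotProduct_symPart_mulVec_self (A : Matrix ι ι ℝ) (v : ι → ℝ) :
    v ⬝ᵥ symPart A *ᵥ v = v ⬝ᵥ A *ᵥ v := by
  rw [symPart, smul_mulVec, dotProduct_smul, add_mulVec, dotProduct_add,
    dotProduct_transpose_mulVec_self, smul_eq_mul]
  ring

theorem add_dotProduct_mulVec_add (hM : Mᵀ = M) (z f : ι → ℝ) :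
    (z + f) ⬝ᵥ M *ᵥ (z + f) = z ⬝ᵥ M *ᵥ z + 2 * (M *ᵥ f ⬝ᵥ z) + f ⬝ᵥ M *ᵥ f := by
  rw [add_dotProduct, mulVec_add, dotProduct_add, dotProduct_add,
    dotProduct_mulVec_of_transpose_eq hM f z, dotProduct_comm z (M *ᵥ f)]
  ring

variable [DecidableEq ι]

theorem hasDerivAt_quadForm_exp_mul (hM : Mᵀ = M) (S : Matrix ι ι ℝ) (w : ι → ℝ) (t : ℝ) :
    HasDerivAt
      (fun s => NormedSpace.exp (s • (S * M)) *ᵥ w ⬝ᵥ M *ᵥ (NormedSpace.exp (s • (S * M)) *ᵥ w))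
      (2 * (M *ᵥ (NormedSpace.exp (t • (S * M)) *ᵥ w) ⬝ᵥ
        S *ᵥ (M *ᵥ (NormedSpace.exp (t • (S * M)) *ᵥ w)))) t := by
  have hy := hasDerivAt_exp_smul_mulVec (S * M) w t
  convert hy.dotProduct (hy.matrix_mulVec M) using 1
  set y := NormedSpace.exp (t • (S * M)) *ᵥ w
  rw [← mulVec_mulVec, dotProduct_mulVec_of_transpose_eq hM y, dotProduct_comm (S *ᵥ _)]
  ring

theorem quadForm_exp_mul_eq_of_transpose_eq_neg (hM : Mᵀ = M) {S : Matrix ι ι ℝ}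
    (hS : Sᵀ = -S) (w : ι → ℝ) :
    NormedSpace.exp (S * M) *ᵥ w ⬝ᵥ M *ᵥ (NormedSpace.exp (S * M) *ᵥ w) = w ⬝ᵥ M *ᵥ w := by
  have hq := hasDerivAt_quadForm_exp_mul hM S w
  have h := is_const_of_deriv_eq_zero (fun t => (hq t).differentiableAt)
    (fun t => by rw [(hq t).deriv, dotProduct_mulVec_self_eq_zero_of_transpose_eq_neg hS, mul_zero])
    1 0
  simpa only [one_smul, zero_smul, NormedSpace.exp_zero, one_mulVec] using h

theorem quadForm_exp_mul_le (hM : Mᵀ = M) {S : Matrix ι ι ℝ} (hS : ∀ v, v ⬝ᵥ S *ᵥ v ≤ 0)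
    (w : ι → ℝ) :
    NormedSpace.exp (S * M) *ᵥ w ⬝ᵥ M *ᵥ (NormedSpace.exp (S * M) *ᵥ w) ≤ w ⬝ᵥ M *ᵥ w := by
  have hq := hasDerivAt_quadForm_exp_mul hM S w
  have h := antitone_of_deriv_nonpos (fun t => (hq t).differentiableAt)
    (fun t => by rw [(hq t).deriv]; linarith [hS (M *ᵥ (NormedSpace.exp (t • (S * M)) *ᵥ w))])
    zero_le_one
  simpa only [one_smul, zero_smul, NormedSpace.exp_zero, one_mulVec] using h

end

theorem exp_eq_one_add_phi1_mul {n : ℕ} (B : Matrix (Fin n) (Fin n) ℝ) :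
    NormedSpace.exp B = 1 + phi1 B * B := by
  let : NormedRing (Matrix (Fin n) (Fin n) ℝ) := Matrix.linftyOpNormedRing
  let : NormedAlgebra ℝ (Matrix (Fin n) (Fin n) ℝ) := Matrix.linftyOpNormedAlgebra
  have hexp : Summable fun k : ℕ => ((k.factorial : ℝ))⁻¹ • B ^ k :=
    NormedSpace.expSeries_summable' (𝕂 := ℝ) B
  have hphi1 : Summable fun k : ℕ => (((k + 1).factorial : ℝ))⁻¹ • B ^ k := by
    refine .of_norm <| .of_nonneg_of_le (fun k => norm_nonneg _) (fun k => ?_)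
      (NormedSpace.norm_expSeries_summable' (𝕂 := ℝ) B)
    rw [norm_smul, norm_smul]
    gcongr
    rw [norm_inv, norm_inv, RCLike.norm_natCast, RCLike.norm_natCast]
    gcongr
    exact k.le_succ
  rw [NormedSpace.exp_eq_tsum ℝ]
  beta_reduce
  rw [hexp.tsum_eq_zero_add, phi1, ← hphi1.tsum_mul_right]
  simp only [pow_zero, Nat.factorial_zero, Nat.cast_one, inv_one, one_smul, pow_succ,
    smul_mul_assoc]

theorem exp_mulVec_add_phi1_mulVec {n : ℕ} (A : Matrix (Fin n) (Fin n) ℝ) (z u : Fin n → ℝ) :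
    NormedSpace.exp A *ᵥ z + phi1 A *ᵥ (A *ᵥ u) + u = NormedSpace.exp A *ᵥ (z + u) := by
  rw [mulVec_add, exp_eq_one_add_phi1_mul A, add_mulVec _ _ u, one_mulVec, mulVec_mulVec]
  abel

theorem stmt12_general {n : ℕ} (M S : Matrix (Fin n) (Fin n) ℝ)
    (hMsymm : Mᵀ = M) (hMpd : M.PosDef)
    (V : (Fin n → ℝ) → ℝ) (gradV : (Fin n → ℝ) → (Fin n → ℝ))
    (h : ℝ) (hh : 0 < h) (η : ℝ) (zhat : Fin n → ℝ)
    (zn zn1 : Fin n → ℝ)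
    (hzstep : zn1 = (NormedSpace.exp (h • (S * M))).mulVec zn
      + (h * η) • (phi1 (h • (S * M))).mulVec (S.mulVec (gradV zhat)))
    (hconstraint : V zn1 - V zn = η * (gradV zhat ⬝ᵥ (zn1 - zn))) :
    (Sᵀ = -S →
      (1/2 : ℝ) * (zn1 ⬝ᵥ M.mulVec zn1) + V zn1
        = (1/2 : ℝ) * (zn ⬝ᵥ M.mulVec zn) + V zn)
    ∧ (NegSemidef (symPart S) →
      (1/2 : ℝ) * (zn1 ⬝ᵥ M.mulVec zn1) + V zn1
        ≤ (1/2 : ℝ) * (zn ⬝ᵥ M.mulVec zn) + V zn) := by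
  set g := gradV zhat
  set f : Fin n → ℝ := η • (M⁻¹ *ᵥ g)
  have hMf : M *ᵥ f = η • g := by
    rw [mulVec_smul, mulVec_mulVec, mul_nonsing_inv M (M.isUnit_iff_isUnit_det.mp hMpd.isUnit),
      one_mulVec]
  have hflow : zn1 + f = NormedSpace.exp ((h • S) * M) *ᵥ (zn + f) := by
    have hAf : (h • (S * M)) *ᵥ f = (h * η) • (S *ᵥ g) := by
      rw [smul_mulVec, ← mulVec_mulVec, hMf, mulVec_smul, smul_smul]
    rw [smul_mul_assoc, ← exp_mulVec_add_phi1_mulVec, hAf, mulVec_smul, hzstep]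
  have henergy : (1/2 : ℝ) * (zn1 ⬝ᵥ M *ᵥ zn1) + V zn1 - ((1/2 : ℝ) * (zn ⬝ᵥ M *ᵥ zn) + V zn)
      = (1/2 : ℝ) * ((zn1 + f) ⬝ᵥ M *ᵥ (zn1 + f) - (zn + f) ⬝ᵥ M *ᵥ (zn + f)) := by
    rw [add_dotProduct_mulVec_add hMsymm, add_dotProduct_mulVec_add hMsymm, hMf]
    simp only [smul_dotProduct, smul_eq_mul]
    rw [dotProduct_sub] at hconstraint
    linarith
  refine ⟨fun hS => ?_, fun hS => ?_⟩
  · have hskew : (h • S)ᵀ = -(h • S) := by rw [transpose_smul, hS, smul_neg]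
    have := quadForm_exp_mul_eq_of_transpose_eq_neg hMsymm hskew (zn + f)
    rw [← hflow] at this
    linarith
  · have hnonpos (v : Fin n → ℝ) : v ⬝ᵥ (h • S) *ᵥ v ≤ 0 := by
      rw [smul_mulVec, dotProduct_smul, smul_eq_mul, ← dotProduct_symPart_mulVec_self]
      exact mul_nonpos_of_nonneg_of_nonpos hh.le (hS.2 v)
    have := quadForm_exp_mul_le hMsymm hnonpos (zn + f)
    rw [← hflow] at this
    linarith

/-- one step of EILM,
`zⁿ⁺¹ = e^A zⁿ + h φ₁(A) S η ∇V(ẑ)` with the constraint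
`V(zⁿ⁺¹) − V(zⁿ) = η ∇V(ẑ)ᵀ(zⁿ⁺¹ − zⁿ)`, conserves the discrete energy
`H(z) = ½ zᵀMz + V(z)` when `S` is skew-symmetric, and dissipates it when the
symmetric part of `S` is negative semidefinite. -/
theorem stmt12 {n : ℕ} (M S : Matrix (Fin n) (Fin n) ℝ)
    (hMsymm : Mᵀ = M) (hMpd : M.PosDef)
    (V : (Fin n → ℝ) → ℝ) (gradV : (Fin n → ℝ) → (Fin n → ℝ))
    (hV : ∀ z, HasFDerivAt V (dotCLM (gradV z)) z)
    (h : ℝ) (hh : 0 < h) (η : ℝ) (zhat : Fin n → ℝ)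
    (zn zn1 : Fin n → ℝ)
    (hzstep : zn1 = (NormedSpace.exp (h • (S * M))).mulVec zn
      + (h * η) • (phi1 (h • (S * M))).mulVec (S.mulVec (gradV zhat)))
    (hconstraint : V zn1 - V zn = η * (gradV zhat ⬝ᵥ (zn1 - zn))) :
    (Sᵀ = -S →
      (1/2 : ℝ) * (zn1 ⬝ᵥ M.mulVec zn1) + V zn1
        = (1/2 : ℝ) * (zn ⬝ᵥ M.mulVec zn) + V zn)
    ∧ (NegSemidef (symPart S) →
      (1/2 : ℝ) * (zn1 ⬝ᵥ M.mulVec zn1) + V zn1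
        ≤ (1/2 : ℝ) * (zn ⬝ᵥ M.mulVec zn) + V zn) :=
  stmt12_general M S hMsymm hMpd V gradV h hh η zhat zn zn1 hzstep hconstraint
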